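/- arXiv:1502.02490 — 2 statements merged into one kernel-verified Lean document; each statement's English description precedes it below -/
import Mathlib

section
/- Let F: ℝ → ℝ be C² and let β_ξ be the standard smooth convex approximation of the absolute value at scale ξ > 0 (so |β_ξ'| ≤ 1 and β_ξ'(s) = sgn(s) for |s| ≥ ξ). Define F^{β_ξ}(a,b) := ∫_b^a β_ξ'(σ − b) F'(σ) dσ. Then for all u, v ∈ ℝ, |∂_v( F^{β_ξ}(u,v) − F^{β_ξ}(v,u) )| ≤ M₂ ξ ‖F''‖_∞, where M₂ = sup |β''|. -/
/-!
Splitting off the moving endpoint, differentiating under the integral and integrating by parts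
(`β_ξ'` is odd, so `β_ξ'(0) = 0`) give
`∂_v (F^{β_ξ}(u,v) - F^{β_ξ}(v,u)) = ∫_v^u (β_ξ'(σ - v) - β_ξ'(u - v)) F''(σ) dσ`.
The bracket vanishes once `|σ - v| ≥ ξ`, since `β_ξ' = sgn` there, and elsewhere it is at most
`ξ · sup |β_ξ''| = M₂` by the mean value theorem; so the integral is at most `M₂ ξ ‖F''‖_∞`.
-/

open intervalIntegral MeasureTheory Set Filter Topology Interval

noncomputable def entropyFlux (φ f' : ℝ → ℝ) (a b : ℝ) : ℝ := ∫ σ in b..a, φ (σ - b) * f' σ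

lemma deriv_neg_of_even {f : ℝ → ℝ} (hf : ∀ x, f (-x) = f x) (x : ℝ) :
    deriv f (-x) = -deriv f x := by
  have h := congrArg (deriv · x) (funext hf : (fun y => f (-y)) = f)
  simp only [deriv_comp_neg] at h
  linarith

lemma deriv_comp_div_const (f : ℝ → ℝ) (ξ x : ℝ) :
    deriv (fun r => f (r / ξ)) x = ξ⁻¹ * deriv f (x / ξ) := by
  simp_rw [div_eq_inv_mul]
  exact deriv_comp_mul_left ξ⁻¹ f x

lemma deriv_const_mul_comp_div (f : ℝ → ℝ) {ξ : ℝ} (hξ : ξ ≠ 0) :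
    deriv (fun r => ξ * f (r / ξ)) = fun x => deriv f (x / ξ) := by
  ext x
  simp only [deriv_const_mul_field', deriv_comp_div_const, mul_inv_cancel_left₀ hξ]

section

variable {k h g : ℝ → ℝ} {L ξ C c₁ c₂ : ℝ}

lemma abs_sub_le_of_abs_deriv_le (hk : Differentiable ℝ k) (hkL : ∀ x, |deriv k x| ≤ L)
    (x y : ℝ) : |k x - k y| ≤ L * |x - y| :=
  convex_univ.norm_image_sub_le_of_norm_deriv_le (fun z _ => hk z) (fun z _ => hkL z)
    (mem_univ y) (mem_univ x)

lemma hasDerivAt_integral_self_comp_sub_mul (hk : ∀ x, |k x| ≤ L * |x|) (hh : Continuous h)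
    (v : ℝ) :
    HasDerivAt (fun w => ∫ σ in v..w, k (σ - w) * h σ) 0 v := by
  have hL : 0 ≤ L := by simpa using (abs_nonneg _).trans (hk 1)
  obtain ⟨C, hC⟩ := (isCompact_closedBall v 1).exists_bound_of_continuousOn hh.continuousOn
  have hquad : (fun w => ∫ σ in v..w, k (σ - w) * h σ) =O[𝓝 v] fun w => ‖w - v‖ ^ 2 := by
    refine Asymptotics.isBigO_iff.2 ⟨L * C, ?_⟩
    filter_upwards [Metric.closedBall_mem_nhds v one_pos] with w hw
    have hbound : ∀ σ ∈ Ι v w, ‖k (σ - w) * h σ‖ ≤ L * |w - v| * C := by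
      intro σ hσ
      have hσ' := uIoc_subset_uIcc hσ
      have hσv : |σ - v| ≤ |w - v| := abs_sub_left_of_mem_uIcc hσ'
      have hσw : |σ - w| ≤ |w - v| := abs_sub_comm σ w ▸ abs_sub_right_of_mem_uIcc hσ'
      rw [norm_mul]
      refine mul_le_mul ((hk _).trans (by gcongr)) (hC σ ?_) (norm_nonneg _) (by positivity)
      rw [Metric.mem_closedBall, Real.dist_eq] at hw ⊢
      exact hσv.trans hw
    calc ‖∫ σ in v..w, k (σ - w) * h σ‖ ≤ L * |w - v| * C * |w - v| :=
          norm_integral_le_of_norm_le_const hbound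
      _ = L * C * ‖‖w - v‖ ^ 2‖ := by simp only [Real.norm_eq_abs, abs_pow, abs_abs]; ring
  simpa using (hquad.hasFDerivAt (𝕜 := ℝ) one_lt_two).hasDerivAt

lemma hasDerivAt_integral_comp_sub_mul (hk : ContDiff ℝ 1 k) (hkL : ∀ x, |deriv k x| ≤ L)
    (hh : Continuous h) (a b v : ℝ) :
    HasDerivAt (fun w => ∫ σ in a..b, k (σ - w) * h σ)
      (-∫ σ in a..b, deriv k (σ - v) * h σ) v := by
  have hcont : ∀ w, Continuous fun σ => k (σ - w) * h σ := fun w =>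
    (hk.continuous.comp (continuous_sub_right w)).mul hh
  have hcont' : Continuous fun σ => -(deriv k (σ - v) * h σ) :=
    (((hk.continuous_deriv le_rfl).comp (continuous_sub_right v)).mul hh).neg
  rw [← intervalIntegral.integral_neg]
  refine (hasDerivAt_integral_of_dominated_loc_of_deriv_le (bound := fun σ => L * |h σ|)
    (F := fun w σ => k (σ - w) * h σ) (F' := fun w σ => -(deriv k (σ - w) * h σ))
    univ_mem (.of_forall fun w => (hcont w).aestronglyMeasurable)
    ((hcont v).intervalIntegrable _ _) hcont'.aestronglyMeasurable
    (.of_forall fun σ _ w _ => ?_) ((continuous_const.mul hh.abs).intervalIntegrable _ _)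
    (.of_forall fun σ _ w _ => ?_)).2
  · rw [Real.norm_eq_abs, abs_neg, abs_mul]
    exact mul_le_mul_of_nonneg_right (hkL _) (abs_nonneg _)
  · exact (((hk.differentiable one_ne_zero (σ - w)).hasDerivAt.comp_const_sub σ w).mul_const
      (h σ)).congr_deriv (neg_mul _ _)

lemma hasDerivAt_entropyFlux_right (hk : ContDiff ℝ 1 k) (hkL : ∀ x, |deriv k x| ≤ L)
    (hk0 : k 0 = 0) (hh : ContDiff ℝ 1 h) (u v : ℝ) :
    HasDerivAt (fun w => entropyFlux k h u w)
      ((∫ σ in v..u, k (σ - v) * deriv h σ) - k (u - v) * h u) v := by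
  have hkd := hk.differentiable one_ne_zero
  have hhc := hh.continuous
  have hcont : ∀ w, Continuous fun σ => k (σ - w) * h σ := fun w =>
    (hk.continuous.comp (continuous_sub_right w)).mul hhc
  -- the piece with the moving endpoint is `O((w - v) ^ 2)` because `k 0 = 0`
  have hsplit : (fun w => entropyFlux k h u w) = fun w =>
      (∫ σ in v..u, k (σ - w) * h σ) - ∫ σ in v..w, k (σ - w) * h σ := by
    ext w
    exact (integral_interval_sub_left ((hcont w).intervalIntegrable _ _)
      ((hcont w).intervalIntegrable _ _)).symm
  have hlin : ∀ x, |k x| ≤ L * |x| := fun x => by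
    simpa [hk0] using abs_sub_le_of_abs_deriv_le hkd hkL x 0
  have hparts : ∫ σ in v..u, k (σ - v) * deriv h σ
      = k (u - v) * h u - ∫ σ in v..u, deriv k (σ - v) * h σ := by
    rw [integral_mul_deriv_eq_deriv_mul (u' := fun σ => deriv k (σ - v))
      (fun σ _ => (hkd (σ - v)).hasDerivAt.comp_sub_const σ v)
      (fun σ _ => (hh.differentiable one_ne_zero σ).hasDerivAt)
      (((hk.continuous_deriv le_rfl).comp (continuous_sub_right v)).intervalIntegrable _ _)
      ((hh.continuous_deriv le_rfl).intervalIntegrable _ _), sub_self, hk0, zero_mul, sub_zero]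
  rw [hsplit, hparts, sub_sub_cancel_left, ← sub_zero (-_)]
  exact (hasDerivAt_integral_comp_sub_mul hk hkL hhc v u v).sub
    (hasDerivAt_integral_self_comp_sub_mul hlin hhc v)

lemma hasDerivAt_entropyFlux_left (hk : Continuous k) (hh : Continuous h) (u v : ℝ) :
    HasDerivAt (fun w => entropyFlux k h w u) (k (v - u) * h v) v :=
  ((hk.comp (continuous_sub_right u)).mul hh).integral_hasStrictDerivAt u v |>.hasDerivAt

lemma hasDerivAt_entropyFlux_sub_swap (hk : ContDiff ℝ 1 k) (hkL : ∀ x, |deriv k x| ≤ L)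
    (hodd : ∀ x, k (-x) = -k x) (hh : ContDiff ℝ 1 h) (u v : ℝ) :
    HasDerivAt (fun w => entropyFlux k h u w - entropyFlux k h w u)
      (∫ σ in v..u, (k (σ - v) - k (u - v)) * deriv h σ) v := by
  have hk0 : k 0 = 0 := by linarith [neg_zero (G := ℝ) ▸ hodd 0]
  have hh' := hh.continuous_deriv le_rfl
  refine ((hasDerivAt_entropyFlux_right hk hkL hk0 hh u v).sub
    (hasDerivAt_entropyFlux_left hk.continuous hh.continuous u v)).congr_deriv ?_
  have hint : IntervalIntegrable (fun σ => k (σ - v) * deriv h σ) volume v u :=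
    ((hk.continuous.comp (continuous_sub_right v)).mul hh').intervalIntegrable _ _
  rw [← neg_sub u v, hodd]
  simp_rw [sub_mul]
  rw [integral_sub hint ((hh'.intervalIntegrable _ _).const_mul _),
    intervalIntegral.integral_const_mul,
    integral_deriv_eq_sub (fun σ _ => hh.differentiable one_ne_zero σ) (hh'.intervalIntegrable _ _)]
  ring

lemma abs_integral_sub_mul_le_of_le (hξ : 0 ≤ ξ) (hk : ∀ x y, |k x - k y| ≤ L * |x - y|)
    (hk_right : ∀ s, ξ ≤ s → k s = c₁) (hg : Continuous g) (hgC : ∀ x, |g x| ≤ C) {a b : ℝ}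
    (hab : a ≤ b) :
    |∫ σ in a..b, (k (σ - a) - k (b - a)) * g σ| ≤ L * ξ ^ 2 * C := by
  have hL : 0 ≤ L := by simpa using (abs_nonneg _).trans (hk 1 0)
  have hC : 0 ≤ C := (abs_nonneg _).trans (hgC 0)
  have hcont : Continuous fun σ => (k (σ - a) - k (b - a)) * g σ :=
    ((((LipschitzWith.of_dist_le' hk).continuous).comp (continuous_sub_right a)).sub
      continuous_const).mul hg
  set t := a + min (b - a) ξ with ht
  have hat : a ≤ t := le_add_of_nonneg_right (le_min (sub_nonneg.2 hab) hξ)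
  have htb : t ≤ b := by linarith [min_le_left (b - a) ξ]
  have htξ : |t - a| ≤ ξ := by
    rw [abs_of_nonneg (sub_nonneg.2 hat)]; linarith [min_le_right (b - a) ξ]
  -- beyond `a + ξ` both values of `k` lie in the region where `k` is constant
  have htail : ∫ σ in t..b, (k (σ - a) - k (b - a)) * g σ = 0 := by
    refine (integral_congr fun σ hσ => ?_).trans integral_zero
    rw [uIcc_of_le htb] at hσ
    rcases le_total (b - a) ξ with h | h
    · obtain rfl : σ = b := by linarith [min_eq_left h, hσ.1, hσ.2]
      simp
    · simp [hk_right _ h, hk_right (σ - a) (by linarith [min_eq_right h, hσ.1])]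
  have hkb : k (b - a) = k (t - a) := by
    rcases le_total (b - a) ξ with h | h
    · rw [ht, add_sub_cancel_left, min_eq_left h]
    · rw [ht, add_sub_cancel_left, min_eq_right h, hk_right _ h, hk_right _ le_rfl]
  have hhead : ∀ σ ∈ Ι a t, ‖(k (σ - a) - k (b - a)) * g σ‖ ≤ L * ξ * C := by
    intro σ hσ
    rw [norm_mul, Real.norm_eq_abs, Real.norm_eq_abs, hkb]
    refine mul_le_mul ((hk _ _).trans ?_) (hgC σ) (abs_nonneg _) (by positivity)
    rw [sub_sub_sub_cancel_right, abs_sub_comm]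
    exact mul_le_mul_of_nonneg_left
      ((abs_sub_right_of_mem_uIcc (uIoc_subset_uIcc hσ)).trans htξ) hL
  rw [← integral_add_adjacent_intervals (hcont.intervalIntegrable a t)
    (hcont.intervalIntegrable t b), htail, add_zero]
  calc |∫ σ in a..t, (k (σ - a) - k (b - a)) * g σ| ≤ L * ξ * C * |t - a| :=
        norm_integral_le_of_norm_le_const hhead
    _ ≤ L * ξ * C * ξ := by gcongr
    _ = L * ξ ^ 2 * C := by ring

lemma abs_integral_sub_mul_le (hξ : 0 ≤ ξ) (hk : ∀ x y, |k x - k y| ≤ L * |x - y|)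
    (hk_right : ∀ s, ξ ≤ s → k s = c₁) (hk_left : ∀ s, s ≤ -ξ → k s = c₂) (hg : Continuous g)
    (hgC : ∀ x, |g x| ≤ C) (a b : ℝ) :
    |∫ σ in a..b, (k (σ - a) - k (b - a)) * g σ| ≤ L * ξ ^ 2 * C := by
  rcases le_total a b with hab | hba
  · exact abs_integral_sub_mul_le_of_le hξ hk hk_right hg hgC hab
  -- reflect `σ ↦ -σ`, which swaps the two constant regions of `k`
  have hrefl := abs_integral_sub_mul_le_of_le (k := fun s => k (-s)) (g := fun σ => g (-σ)) hξ
    (L := L) (fun x y => by simpa only [neg_sub_neg, abs_sub_comm y x] using hk (-x) (-y))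
    (fun s hs => hk_left (-s) (by linarith)) (hg.comp continuous_neg) (fun x => hgC _)
    (neg_le_neg hba)
  have hneg := integral_comp_neg (a := -a) (b := -b) fun σ => (k (σ - a) - k (b - a)) * g σ
  simp only [neg_neg] at hneg
  simp only [sub_neg_eq_add, neg_add', neg_neg] at hrefl
  rwa [hneg, integral_symm, abs_neg] at hrefl

end

theorem statement4_general
    (β : ℝ → ℝ) (hβ : ContDiff ℝ 2 β)
    (heven : ∀ r, β (-r) = β r)
    (M₂ : ℝ) (hM₂ : ∀ r, |deriv (deriv β) r| ≤ M₂)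
    (ξ : ℝ) (hξ : 0 < ξ)
    (βξ : ℝ → ℝ) (hβξ : βξ = fun r => ξ * β (r / ξ))
    (hβξsgn : ∀ s : ℝ, ξ ≤ |s| → deriv βξ s = Real.sign s)
    (F : ℝ → ℝ) (hF : ContDiff ℝ 2 F)
    (CF : ℝ) (hCF : ∀ r, |deriv (deriv F) r| ≤ CF)
    (Fβ : ℝ → ℝ → ℝ)
    (hFβ : Fβ = fun a b => ∫ σ in b..a, deriv βξ (σ - b) * deriv F σ) :
    ∀ u v : ℝ, |deriv (fun w => Fβ u w - Fβ w u) v| ≤ M₂ * ξ * CF := by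
  intro u v
  have hφ : deriv βξ = fun s => deriv β (s / ξ) := hβξ ▸ deriv_const_mul_comp_div β hξ.ne'
  have hφ_smooth : ContDiff ℝ 1 (deriv βξ) :=
    hφ ▸ (hβ.deriv' (n := 1)).comp (contDiff_id.div_const ξ)
  have hφ_deriv : ∀ s, |deriv (deriv βξ) s| ≤ M₂ / ξ := fun s => by
    rw [hφ, deriv_comp_div_const, abs_mul, abs_inv, abs_of_pos hξ, inv_mul_eq_div]
    exact div_le_div_of_nonneg_right (hM₂ _) hξ.le
  have hφ_odd : ∀ s, deriv βξ (-s) = -deriv βξ s := fun s => by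
    simpa only [hφ, neg_div] using deriv_neg_of_even heven (s / ξ)
  have hφ_right : ∀ s, ξ ≤ s → deriv βξ s = 1 := fun s hs => by
    rw [hβξsgn s (hs.trans (le_abs_self s)), Real.sign_of_pos (hξ.trans_le hs)]
  have hφ_left : ∀ s, s ≤ -ξ → deriv βξ s = -1 := fun s hs => by
    rw [hβξsgn s (le_abs.2 (Or.inr (le_neg_of_le_neg hs))), Real.sign_of_neg (by linarith)]
  have hF' : ContDiff ℝ 1 (deriv F) := hF.deriv' (n := 1)
  have hFβ' : Fβ = entropyFlux (deriv βξ) (deriv F) := hFβ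
  rw [hFβ', (hasDerivAt_entropyFlux_sub_swap hφ_smooth hφ_deriv hφ_odd hF' u v).deriv]
  calc _ ≤ M₂ / ξ * ξ ^ 2 * CF :=
        abs_integral_sub_mul_le hξ.le
          (abs_sub_le_of_abs_deriv_le (hφ_smooth.differentiable one_ne_zero) hφ_deriv)
          hφ_right hφ_left (hF'.continuous_deriv le_rfl) hCF v u
    _ = M₂ * ξ * CF := by field_simp

theorem statement4
    (β : ℝ → ℝ) (hβ : ContDiff ℝ 2 β)
    (hconv : ∀ r, 0 ≤ deriv (deriv β) r)
    (heven : ∀ r, β (-r) = β r) (h0 : β 0 = 0)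
    (hsgn : ∀ r : ℝ, 1 ≤ |r| → deriv β r = Real.sign r)
    (M₂ : ℝ) (hM₂ : ∀ r, |deriv (deriv β) r| ≤ M₂)
    (ξ : ℝ) (hξ : 0 < ξ)
    (βξ : ℝ → ℝ) (hβξ : βξ = fun r => ξ * β (r / ξ))
    (hβξ'1 : ∀ s, |deriv βξ s| ≤ 1)
    (hβξsgn : ∀ s : ℝ, ξ ≤ |s| → deriv βξ s = Real.sign s)
    (F : ℝ → ℝ) (hF : ContDiff ℝ 2 F)
    (CF : ℝ) (hCF : ∀ r, |deriv (deriv F) r| ≤ CF)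
    (Fβ : ℝ → ℝ → ℝ)
    (hFβ : Fβ = fun a b => ∫ σ in b..a, deriv βξ (σ - b) * deriv F σ) :
    ∀ u v : ℝ, |deriv (fun w => Fβ u w - Fβ w u) v| ≤ M₂ * ξ * CF :=
  statement4_general β hβ heven M₂ hM₂ ξ hξ βξ hβξ hβξsgn F hF CF hCF Fβ hFβ
end

section
/- Let β_ξ be the smooth convex approximation of the absolute value at scale ξ > 0, with s² β_ξ''(s) ≤ M₂ ξ and β_ξ'' ≤ M₂/ξ for all s. Let 0 < λ* < 1, K ≥ 0, and a, b ∈ ℝ, c ≥ 0 with |b| ≤ λ* |a| + K c. Then for all ρ ∈ [0,1], b² β_ξ''(a + ρb) ≤ 2(1−λ*)^{−2} M₂ ξ + C(K,λ*) c²/ξ, where C(K,λ*) is a constant depending only on K and λ*. -/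
/-!
Write `s = a + ρ b` for the evaluation point. Since `|a| ≤ |s| + |b|`, the hypothesis
`|b| ≤ λ|a| + Kc` absorbs into `(1 - λ)|b| ≤ |s| + Kc`, so `b² ≤ 2(1 - λ)⁻²(s² + K²c²)`.
Where `β_ξ''(s) > 0`, the `s²` part is controlled by `s² β_ξ''(s) ≤ M₂ ξ` and the `c²` part
by `β_ξ''(s) ≤ M₂ / ξ`; where `β_ξ''(s) ≤ 0` the left side is nonpositive.
-/

lemma abs_le_inv_one_sub_mul_of_abs_le {lam a b d ρ : ℝ} (hlam : 0 ≤ lam) (hlam1 : lam < 1)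
    (hρ : ρ ∈ Set.Icc (0 : ℝ) 1) (hb : |b| ≤ lam * |a| + d) :
    |b| ≤ (1 - lam)⁻¹ * (|a + ρ * b| + d) := by
  have ha : |a| ≤ |a + ρ * b| + |b| :=
    calc |a| = |(a + ρ * b) - ρ * b| := by ring_nf
      _ ≤ |a + ρ * b| + |ρ * b| := abs_sub _ _
      _ ≤ |a + ρ * b| + |b| := by
          rw [abs_mul, abs_of_nonneg hρ.1]
          gcongr
          exact mul_le_of_le_one_left (abs_nonneg b) hρ.2
  rw [le_inv_mul_iff₀ (sub_pos.2 hlam1)]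
  nlinarith [mul_le_mul_of_nonneg_left ha hlam, abs_nonneg (a + ρ * b)]

lemma sq_le_of_abs_le_mul_abs_add {lam a b d ρ : ℝ} (hlam : 0 ≤ lam) (hlam1 : lam < 1)
    (hρ : ρ ∈ Set.Icc (0 : ℝ) 1) (hb : |b| ≤ lam * |a| + d) :
    b ^ 2 ≤ 2 * ((1 - lam)⁻¹) ^ 2 * ((a + ρ * b) ^ 2 + d ^ 2) := by
  have h := abs_le_inv_one_sub_mul_of_abs_le hlam hlam1 hρ hb
  calc b ^ 2 = |b| ^ 2 := (sq_abs b).symm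
    _ ≤ ((1 - lam)⁻¹ * (|a + ρ * b| + d)) ^ 2 := pow_le_pow_left₀ (abs_nonneg b) h 2
    _ = ((1 - lam)⁻¹) ^ 2 * (|a + ρ * b| + d) ^ 2 := by ring
    _ ≤ ((1 - lam)⁻¹) ^ 2 * (2 * ((a + ρ * b) ^ 2 + d ^ 2)) := by
        gcongr
        simpa only [sq_abs] using add_sq_le (a := |a + ρ * b|) (b := d)
    _ = 2 * ((1 - lam)⁻¹) ^ 2 * ((a + ρ * b) ^ 2 + d ^ 2) := by ring

lemma sq_mul_le_of_sq_le {b s B p q M ξ : ℝ} (hp : 0 ≤ p) (hq : 0 ≤ q) (hM : 0 ≤ M)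
    (hξ : 0 < ξ) (hsB : s ^ 2 * B ≤ M * ξ) (hB : B ≤ M / ξ) (hb : b ^ 2 ≤ p * s ^ 2 + q) :
    b ^ 2 * B ≤ p * (M * ξ) + q * (M / ξ) := by
  rcases le_or_gt B 0 with hB0 | hB0
  · have : 0 ≤ p * (M * ξ) + q * (M / ξ) := by positivity
    nlinarith [sq_nonneg b]
  · calc b ^ 2 * B ≤ (p * s ^ 2 + q) * B := by gcongr
      _ = p * (s ^ 2 * B) + q * B := by ring
      _ ≤ p * (M * ξ) + q * (M / ξ) := by gcongr

theorem statement14_general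
    (M₂ : ℝ)
    (ξ : ℝ) (hξ : 0 < ξ)
    (βξ : ℝ → ℝ)
    (hresc : ∀ s : ℝ, s ^ 2 * deriv (deriv βξ) s ≤ M₂ * ξ)
    (hbdd : ∀ s : ℝ, deriv (deriv βξ) s ≤ M₂ / ξ)
    (lam : ℝ) (hlam : 0 < lam) (hlam1 : lam < 1)
    (K : ℝ) :
    ∃ C > (0 : ℝ), ∀ a b c : ℝ, 0 ≤ c → |b| ≤ lam * |a| + K * c →
      ∀ ρ ∈ Set.Icc (0 : ℝ) 1,
        b ^ 2 * deriv (deriv βξ) (a + ρ * b)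
          ≤ 2 * ((1 - lam)⁻¹) ^ 2 * M₂ * ξ + C * c ^ 2 / ξ := by
  have hM₂ : 0 ≤ M₂ := by
    have := hresc 0
    rw [zero_pow two_ne_zero, zero_mul] at this
    exact nonneg_of_mul_nonneg_left this hξ
  refine ⟨2 * ((1 - lam)⁻¹) ^ 2 * K ^ 2 * M₂ + 1, by positivity, ?_⟩
  intro a b c _ hb ρ hρ
  have hsq : b ^ 2 ≤ 2 * ((1 - lam)⁻¹) ^ 2 * (a + ρ * b) ^ 2
      + 2 * ((1 - lam)⁻¹) ^ 2 * (K * c) ^ 2 := by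
    linarith [sq_le_of_abs_le_mul_abs_add hlam.le hlam1 hρ hb]
  calc b ^ 2 * deriv (deriv βξ) (a + ρ * b)
      ≤ 2 * ((1 - lam)⁻¹) ^ 2 * (M₂ * ξ) + 2 * ((1 - lam)⁻¹) ^ 2 * (K * c) ^ 2 * (M₂ / ξ) :=
        sq_mul_le_of_sq_le (by positivity) (by positivity) hM₂ hξ (hresc _) (hbdd _) hsq
    _ = 2 * ((1 - lam)⁻¹) ^ 2 * M₂ * ξ + 2 * ((1 - lam)⁻¹) ^ 2 * K ^ 2 * M₂ * c ^ 2 / ξ := by ring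
    _ ≤ 2 * ((1 - lam)⁻¹) ^ 2 * M₂ * ξ + (2 * ((1 - lam)⁻¹) ^ 2 * K ^ 2 * M₂ + 1) * c ^ 2 / ξ := by
        gcongr
        linarith

theorem statement14
    (β : ℝ → ℝ) (hβ : ContDiff ℝ 2 β)
    (hconv : ∀ r, 0 ≤ deriv (deriv β) r)
    (heven : ∀ r, β (-r) = β r) (h0 : β 0 = 0)
    (hsgn : ∀ r : ℝ, 1 ≤ |r| → deriv β r = Real.sign r)
    (M₂ : ℝ) (hM₂ : ∀ r, |deriv (deriv β) r| ≤ M₂)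
    (ξ : ℝ) (hξ : 0 < ξ)
    (βξ : ℝ → ℝ) (hβξ : βξ = fun r => ξ * β (r / ξ))
    (hresc : ∀ s : ℝ, s ^ 2 * deriv (deriv βξ) s ≤ M₂ * ξ)
    (hbdd : ∀ s : ℝ, deriv (deriv βξ) s ≤ M₂ / ξ)
    (lam : ℝ) (hlam : 0 < lam) (hlam1 : lam < 1)
    (K : ℝ) (hK : 0 ≤ K) :
    ∃ C > (0 : ℝ), ∀ a b c : ℝ, 0 ≤ c → |b| ≤ lam * |a| + K * c →
      ∀ ρ ∈ Set.Icc (0 : ℝ) 1,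
        b ^ 2 * deriv (deriv βξ) (a + ρ * b)
          ≤ 2 * ((1 - lam)⁻¹) ^ 2 * M₂ * ξ + C * c ^ 2 / ξ :=
  statement14_general M₂ ξ hξ βξ hresc hbdd lam hlam hlam1 K
end
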